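/- arXiv:1011.0943 — 2 statements merged into one kernel-verified Lean document; each statement's English description precedes it below -/
import Mathlib

section
/- Let Z be a random vector in ℝⁿ and G_n a standard Gaussian random vector in ℝⁿ independent of Z. Then for every real p ≥ 1: E[(|Z + G_n|²/2)^p] ≥ n^{p/2}·E[|Z|^p], where both sides are interpreted in [0,∞]. -/
open MeasureTheory ProbabilityTheory Real
open scoped ENNReal RealInnerProductSpace Pointwise NNReal

noncomputable section

/-- A nonnegative function is log-concave if `f(λx+(1-λ)y) ≥ f(x)^λ f(y)^{1-λ}`. -/
def IsLogConcaveFn {E : Type*} [AddCommGroup E] [Module ℝ E] (f : E → ℝ) : Prop :=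
  (∀ x, 0 ≤ f x) ∧
  ∀ x y : E, ∀ l : ℝ, 0 ≤ l → l ≤ 1 →
    f x ^ l * f y ^ (1 - l) ≤ f (l • x + (1 - l) • y)

/-- Hilbert-Schmidt (Frobenius) norm of a matrix. -/
def hsNorm {n : ℕ} (A : Matrix (Fin n) (Fin n) ℝ) : ℝ :=
  Real.sqrt (∑ i, ∑ j, (A i j) ^ 2)

/-- Operator norm of a matrix acting on Euclidean space. -/
def opNorm {n : ℕ} (A : Matrix (Fin n) (Fin n) ℝ) : ℝ :=
  ‖LinearMap.toContinuousLinearMap (Matrix.toEuclideanLin A)‖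

/-- Application of a matrix to a Euclidean vector. -/
def mApp {n : ℕ} (A : Matrix (Fin n) (Fin n) ℝ) (x : EuclideanSpace ℝ (Fin n)) :
    EuclideanSpace ℝ (Fin n) := Matrix.toEuclideanLin A x

/-- The random vector `X` has density `f` with respect to Lebesgue measure. -/
def HasDensityFn {Ω : Type*} [MeasurableSpace Ω] (P : Measure Ω) {n : ℕ}
    (X : Ω → EuclideanSpace ℝ (Fin n)) (f : EuclideanSpace ℝ (Fin n) → ℝ) : Prop :=
  Measurable X ∧ Measure.map X P = volume.withDensity fun x => ENNReal.ofReal (f x)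

/-- `X` is isotropic: centered with identity covariance. -/
def Isotropic {Ω : Type*} [MeasurableSpace Ω] (P : Measure Ω) {n : ℕ}
    (X : Ω → EuclideanSpace ℝ (Fin n)) : Prop :=
  (∫ ω, X ω ∂P) = 0 ∧
  ∀ θ η : EuclideanSpace ℝ (Fin n), (∫ ω, ⟪X ω, θ⟫ * ⟪X ω, η⟫ ∂P) = ⟪θ, η⟫

/-- `X` is ψ_α with constant `b`. -/
def IsPsiAlpha {Ω : Type*} [MeasurableSpace Ω] (P : Measure Ω) {n : ℕ}
    (X : Ω → EuclideanSpace ℝ (Fin n)) (α b : ℝ) : Prop :=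
  ∀ p : ℝ, 2 ≤ p → ∀ y : EuclideanSpace ℝ (Fin n),
    (∫ ω, |⟪X ω, y⟫| ^ p ∂P) ^ (1/p) ≤ b * p ^ (1/α) * (∫ ω, ⟪X ω, y⟫ ^ 2 ∂P) ^ ((1:ℝ)/2)

/-- `G` is a standard Gaussian random vector in `ℝⁿ`. -/
def IsStdGaussian {Ω : Type*} [MeasurableSpace Ω] (P : Measure Ω) {n : ℕ}
    (G : Ω → EuclideanSpace ℝ (Fin n)) : Prop :=
  Measurable G ∧
  Measure.map G P = volume.withDensity fun x =>
    ENNReal.ofReal ((2 * π) ^ (-(n:ℝ)/2) * Real.exp (-‖x‖ ^ 2 / 2))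

/-- Surface area of the unit sphere `S^{k-1}` in `ℝᵏ`. -/
def sphereVol (k : ℕ) : ℝ := 2 * π ^ ((k : ℝ)/2) / Real.Gamma ((k : ℝ)/2)

/-- The marginal density `π_F g(x) = ∫_{F^⊥} g(x+y) dy`. -/
def marginalDensity {n : ℕ} (g : EuclideanSpace ℝ (Fin n) → ℝ)
    (F : Submodule ℝ (EuclideanSpace ℝ (Fin n))) (x : EuclideanSpace ℝ (Fin n)) : ℝ :=
  ∫ y : Fᗮ, g (x + y)

/-- `h_{k,p}(u) = vol(S^{k-1}) ∫₀^∞ t^{p+k-1} π_{u(E₀)} g(t u(θ₀)) dt`. -/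
def hkp {n : ℕ} (g : EuclideanSpace ℝ (Fin n) → ℝ)
    (E₀ : Submodule ℝ (EuclideanSpace ℝ (Fin n))) (θ₀ : EuclideanSpace ℝ (Fin n))
    (k : ℕ) (p : ℝ) (u : Matrix (Fin n) (Fin n) ℝ) : ℝ :=
  sphereVol k * ∫ t in Set.Ioi (0:ℝ), t ^ (p + (k:ℝ) - 1) *
    marginalDensity g (Submodule.map (Matrix.toEuclideanLin u) E₀) (t • mApp u θ₀)

/-- Support functional of the one-sided L_q-centroid body `Z⁺_q(w)`. -/
def suppZplus {m : ℕ} (w : EuclideanSpace ℝ (Fin m) → ℝ) (q : ℝ)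
    (y : EuclideanSpace ℝ (Fin m)) : ℝ :=
  (2 * ∫ x, (max ⟪x, y⟫ 0) ^ q * w x) ^ (1/q)

/-- Ball's body `K_q(w) = {x : q ∫₀^∞ t^{q-1} w(tx) dt ≥ 1}`. -/
def ballBody {m : ℕ} (w : EuclideanSpace ℝ (Fin m) → ℝ) (q : ℝ) :
    Set (EuclideanSpace ℝ (Fin m)) :=
  {x | 1 ≤ q * ∫ t in Set.Ioi (0:ℝ), t ^ (q-1) * w (t • x)}

/-- The one-sided L_q-centroid body `Z⁺_q(w)`, as the convex set with support
functional `suppZplus w q`. -/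
def ZplusBody {m : ℕ} (w : EuclideanSpace ℝ (Fin m) → ℝ) (q : ℝ) :
    Set (EuclideanSpace ℝ (Fin m)) :=
  {x | ∀ y, ⟪x, y⟫ ≤ suppZplus w q y}

/-!
Conditionally on `Z = z`, Jensen's inequality for `t ↦ t ^ p` and the second moment
`E ‖z + G‖² = ‖z‖² + n` give `E (‖z + G‖² / 2) ^ p ≥ ((‖z‖² + n) / 2) ^ p ≥ (√n ‖z‖) ^ p`,
the last step by AM-GM; independence lets us integrate this bound against the law of `Z`.
The Gaussian law, given here by its density, is identified with `stdGaussian` through its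
characteristic function.
-/

lemma ENNReal.rpow_lintegral_le_lintegral_rpow {α : Type*} [MeasurableSpace α] (μ : Measure α)
    [IsProbabilityMeasure μ] {f : α → ℝ≥0∞} (hf : AEMeasurable f μ) {p : ℝ} (hp : 1 ≤ p) :
    (∫⁻ a, f a ∂μ) ^ p ≤ ∫⁻ a, f a ^ p ∂μ := by
  rcases hp.eq_or_lt with rfl | hp
  · simp
  have h := ENNReal.lintegral_mul_le_Lp_mul_Lq μ (Real.HolderConjugate.conjExponent hp) hf
    (aemeasurable_const (b := (1 : ℝ≥0∞)))
  simp only [Pi.mul_apply, mul_one, ENNReal.one_rpow, lintegral_one, measure_univ] at h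
  calc (∫⁻ a, f a ∂μ) ^ p ≤ ((∫⁻ a, f a ^ p ∂μ) ^ (1 / p)) ^ p := by gcongr
    _ = ∫⁻ a, f a ^ p ∂μ := by
      rw [← ENNReal.rpow_mul, one_div, inv_mul_cancel₀ (by positivity), ENNReal.rpow_one]

lemma ProbabilityTheory.IndepFun.lintegral_comp_prodMk {Ω α β : Type*} [MeasurableSpace Ω]
    [MeasurableSpace α] [MeasurableSpace β] {P : Measure Ω} [IsFiniteMeasure P]
    {X : Ω → α} {Y : Ω → β} (hXY : IndepFun X Y P) (hX : Measurable X) (hY : Measurable Y)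
    {f : α × β → ℝ≥0∞} (hf : Measurable f) :
    ∫⁻ ω, f (X ω, Y ω) ∂P = ∫⁻ x, ∫⁻ y, f (x, y) ∂P.map Y ∂P.map X := by
  rw [← lintegral_map hf (hX.prodMk hY),
    hXY.map_prod_eq_prod_map_map hX.aemeasurable hY.aemeasurable, lintegral_prod _ hf.aemeasurable]

lemma integral_sq_gaussianReal (μ : ℝ) (v : ℝ≥0) :
    ∫ x, x ^ 2 ∂gaussianReal μ v = μ ^ 2 + v := by
  have h := variance_eq_sub (memLp_id_gaussianReal (μ := μ) (v := v) 2)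
  rw [variance_id_gaussianReal] at h
  simp only [Pi.pow_apply, id_eq, integral_id_gaussianReal] at h
  linarith

section StdGaussian

open GaussianFourier

variable (V : Type*) [NormedAddCommGroup V] [InnerProductSpace ℝ V] [FiniteDimensional ℝ V]
  [MeasurableSpace V] [BorelSpace V]

def stdGaussianPDFReal (x : V) : ℝ :=
  (2 * π) ^ (-(Module.finrank ℝ V : ℝ) / 2) * Real.exp (-‖x‖ ^ 2 / 2)

lemma integrable_stdGaussianPDFReal : Integrable (stdGaussianPDFReal V) := by
  have h := (integrable_cexp_neg_mul_sq_norm_add (V := V) (b := 1 / 2) (by norm_num) 0 0).norm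
  refine (h.congr (Filter.Eventually.of_forall fun x => ?_)).const_mul
    ((2 * π) ^ (-(Module.finrank ℝ V : ℝ) / 2))
  simp only [Complex.norm_exp]
  congr 1
  simp [div_eq_inv_mul]
  norm_cast

lemma charFun_withDensity_stdGaussianPDFReal (t : V) :
    charFun (volume.withDensity fun x => ENNReal.ofReal (stdGaussianPDFReal V x)) t =
      Complex.exp (-‖t‖ ^ 2 / 2) := by
  set c : ℝ := (2 * π) ^ (-(Module.finrank ℝ V : ℝ) / 2)
  have hintegrand : ∀ x : V, (ENNReal.ofReal (stdGaussianPDFReal V x)).toReal •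
      Complex.exp (⟪x, t⟫ * Complex.I) =
      c * Complex.exp (-(1 / 2 : ℂ) * ‖x‖ ^ 2 + Complex.I * ⟪t, x⟫) := by
    intro x
    rw [stdGaussianPDFReal, ENNReal.toReal_ofReal (by positivity), Complex.real_smul,
      Complex.ofReal_mul, mul_assoc, Complex.ofReal_exp, ← Complex.exp_add, real_inner_comm]
    congr 2
    push_cast
    ring
  have hpow : (π / (1 / 2) : ℂ) ^ ((Module.finrank ℝ V : ℂ) / 2) =
      ((2 * π) ^ ((Module.finrank ℝ V : ℝ) / 2) : ℝ) := by
    rw [Complex.ofReal_cpow (by positivity)]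
    push_cast
    ring_nf
  have hmass : c * (2 * π) ^ ((Module.finrank ℝ V : ℝ) / 2) = 1 := by
    rw [← Real.rpow_add (by positivity), neg_div, neg_add_cancel, Real.rpow_zero]
  rw [charFun_apply, integral_withDensity_eq_integral_toReal_smul
    (by unfold stdGaussianPDFReal; fun_prop)
    (Filter.Eventually.of_forall fun _ => ENNReal.ofReal_lt_top)]
  simp_rw [hintegrand]
  rw [integral_const_mul, integral_cexp_neg_mul_sq_norm_add (by norm_num), hpow, ← mul_assoc,
    ← Complex.ofReal_mul, hmass, Complex.ofReal_one, one_mul, Complex.I_sq]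
  ring_nf

lemma withDensity_stdGaussianPDFReal_eq_stdGaussian :
    volume.withDensity (fun x => ENNReal.ofReal (stdGaussianPDFReal V x)) = stdGaussian V := by
  have := isFiniteMeasure_withDensity_ofReal (integrable_stdGaussianPDFReal V).hasFiniteIntegral
  exact Measure.ext_of_charFun (funext fun t => by
    rw [charFun_withDensity_stdGaussianPDFReal, charFun_stdGaussian])

variable {V}

lemma integral_norm_sq_stdGaussian : ∫ x, ‖x‖ ^ 2 ∂stdGaussian V = Module.finrank ℝ V := by
  have hnorm : ∀ x : Fin (Module.finrank ℝ V) → ℝ,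
      ‖∑ i, x i • stdOrthonormalBasis ℝ V i‖ ^ 2 = ∑ i, x i ^ 2 := by
    intro x
    set b := stdOrthonormalBasis ℝ V
    rw [show ∑ i, x i • b i = b.repr.symm (WithLp.toLp 2 x) from b.sum_repr_symm _,
      LinearIsometryEquiv.norm_map, EuclideanSpace.real_norm_sq_eq]
  rw [stdGaussian, integral_map (Measurable.aemeasurable (by fun_prop)) (by fun_prop)]
  simp_rw [hnorm]
  rw [integral_finsetSum _ fun i _ =>
    integrable_comp_eval (X := fun _ => ℝ) (i := i) (f := fun t : ℝ => t ^ 2)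
      (memLp_id_gaussianReal 2).integrable_sq]
  simp_rw [integral_comp_eval (X := fun _ => ℝ) (f := fun t : ℝ => t ^ 2) (by fun_prop),
    integral_sq_gaussianReal]
  simp

lemma integral_norm_add_sq_stdGaussian (z : V) :
    ∫ x, ‖z + x‖ ^ 2 ∂stdGaussian V = ‖z‖ ^ 2 + Module.finrank ℝ V := by
  have hid : Integrable id (stdGaussian V) := IsGaussian.integrable_id
  have hinner : Integrable (fun x => 2 * ⟪z, x⟫) (stdGaussian V) :=
    (hid.const_inner z).const_mul 2
  have hconst_add_inner : Integrable (fun x => ‖z‖ ^ 2 + 2 * ⟪z, x⟫) (stdGaussian V) :=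
    (integrable_const _).add hinner
  have hsq : Integrable (fun x => ‖x‖ ^ 2) (stdGaussian V) :=
    IsGaussian.memLp_two_id.integrable_norm_pow two_ne_zero
  simp_rw [norm_add_sq_real]
  rw [integral_add hconst_add_inner hsq, integral_add (integrable_const _) hinner,
    integral_const_mul, integral_inner (f := fun x : V => x) hid z]
  simp [integral_norm_sq_stdGaussian]

lemma finrank_rpow_mul_norm_rpow_le_lintegral_stdGaussian (z : V) {p : ℝ} (hp : 1 ≤ p) :
    ENNReal.ofReal ((Module.finrank ℝ V : ℝ) ^ (p / 2)) * ENNReal.ofReal (‖z‖ ^ p) ≤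
      ∫⁻ x, ENNReal.ofReal ((‖z + x‖ ^ 2 / 2) ^ p) ∂stdGaussian V := by
  set d : ℝ := (Module.finrank ℝ V : ℝ)
  have hp0 : 0 ≤ p := zero_le_one.trans hp
  have hamgm : √d * ‖z‖ ≤ (‖z‖ ^ 2 + d) / 2 := by
    have h := two_mul_le_add_sq (√d) ‖z‖
    rw [Real.sq_sqrt (by positivity)] at h
    linarith
  have hmean : ∫⁻ x, ENNReal.ofReal (‖z + x‖ ^ 2 / 2) ∂stdGaussian V =
      ENNReal.ofReal ((‖z‖ ^ 2 + d) / 2) := by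
    have hint : Integrable (fun x => ‖z + x‖ ^ 2 / 2) (stdGaussian V) :=
      (((memLp_const z).add IsGaussian.memLp_two_id).integrable_norm_pow two_ne_zero).div_const 2
    rw [← ofReal_integral_eq_lintegral_ofReal hint
      (Filter.Eventually.of_forall fun x => by positivity), integral_div,
      integral_norm_add_sq_stdGaussian]
  calc ENNReal.ofReal (d ^ (p / 2)) * ENNReal.ofReal (‖z‖ ^ p)
      = ENNReal.ofReal ((√d * ‖z‖) ^ p) := by
        rw [← ENNReal.ofReal_mul (by positivity), Real.mul_rpow (by positivity) (norm_nonneg z),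
          Real.sqrt_eq_rpow, ← Real.rpow_mul (by positivity), one_div_mul_eq_div]
    _ ≤ ENNReal.ofReal (((‖z‖ ^ 2 + d) / 2) ^ p) := by gcongr
    _ = (∫⁻ x, ENNReal.ofReal (‖z + x‖ ^ 2 / 2) ∂stdGaussian V) ^ p := by
        rw [hmean, ENNReal.ofReal_rpow_of_nonneg (by positivity) hp0]
    _ ≤ ∫⁻ x, ENNReal.ofReal (‖z + x‖ ^ 2 / 2) ^ p ∂stdGaussian V :=
        ENNReal.rpow_lintegral_le_lintegral_rpow _ (by fun_prop) hp
    _ = ∫⁻ x, ENNReal.ofReal ((‖z + x‖ ^ 2 / 2) ^ p) ∂stdGaussian V :=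
        lintegral_congr fun x => ENNReal.ofReal_rpow_of_nonneg (by positivity) hp0

end StdGaussian

/-- `E[(|Z+G_n|²/2)^p] ≥ n^{p/2} E|Z|^p` for `p ≥ 1`. -/
theorem statement16 (n : ℕ) (Ω : Type) (_mΩ : MeasurableSpace Ω) (P : Measure Ω)
    (hP : IsProbabilityMeasure P) (Z G : Ω → EuclideanSpace ℝ (Fin n))
    (hZ : Measurable Z) (hG : IsStdGaussian P G) (hInd : IndepFun Z G P)
    (p : ℝ) (hp : 1 ≤ p) :
    ENNReal.ofReal ((n : ℝ) ^ (p/2)) * ∫⁻ ω, ENNReal.ofReal (‖Z ω‖ ^ p) ∂P ≤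
      ∫⁻ ω, ENNReal.ofReal ((‖Z ω + G ω‖ ^ 2 / 2) ^ p) ∂P := by
  obtain ⟨hGm, hGlaw⟩ := hG
  have hlaw : P.map G = stdGaussian (EuclideanSpace ℝ (Fin n)) := by
    simpa [hGlaw, stdGaussianPDFReal] using
      withDensity_stdGaussianPDFReal_eq_stdGaussian (EuclideanSpace ℝ (Fin n))
  rw [hInd.lintegral_comp_prodMk hZ hGm
      (f := fun x => ENNReal.ofReal ((‖x.1 + x.2‖ ^ 2 / 2) ^ p)) (by fun_prop),
    ← lintegral_map (f := fun z => ENNReal.ofReal (‖z‖ ^ p)) (by fun_prop) hZ,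
    ← lintegral_const_mul _ (by fun_prop), hlaw]
  refine lintegral_mono fun z => ?_
  simpa using finrank_rpow_mul_norm_rpow_le_lintegral_stdGaussian z hp
end
end

section
/- Let f be a log-concave probability density on ℝ (∫f = 1) and let ε > 0. If ε ≤ ∫₀^∞ f(x) dx ≤ 1 − ε, then f(0) ≥ ε·sup_{x∈ℝ} f(x). -/
/-!
Let `b < x` with `f b < f x`, and let `g t = exp (a + c t)` be the log-affine function agreeing
with `f` at `b` and `x` (so `c > 0`). Log-concavity puts `f` below `g` on `(-∞, b]` and above `g`
on `[b, x]`, hence `∫_{t ≤ b} f ≤ f b / c` and `∫_b^x f ≥ (f x - f b) / c`. Eliminating `c` gives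
`(∫_{t ≤ b} f) * f x ≤ (∫ f) * f b` for all `x ≥ b`, and the reflection `t ↦ -t` gives the same
with `∫_{t > b} f` for `x ≤ b`. At `b = 0` both half-line masses are at least `ε`.
-/

open MeasureTheory ProbabilityTheory Real
open scoped ENNReal RealInnerProductSpace Pointwise NNReal

noncomputable section

open Set

section ExpAffine

variable {c : ℝ}

theorem integrableOn_exp_affine_Iic (hc : 0 < c) (a b : ℝ) :
    IntegrableOn (fun t => exp (a + c * t)) (Iic b) := by
  simp_rw [exp_add]
  exact (integrableOn_exp_mul_Iic hc b).const_mul (exp a)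

theorem integral_exp_affine_Iic (hc : 0 < c) (a b : ℝ) :
    ∫ t in Iic b, exp (a + c * t) = exp (a + c * b) / c := by
  simp_rw [exp_add, integral_const_mul, integral_exp_mul_Iic hc, mul_div_assoc]

theorem integral_exp_affine (hc : 0 < c) (a u v : ℝ) :
    ∫ t in u..v, exp (a + c * t) = (exp (a + c * v) - exp (a + c * u)) / c := by
  rw [← intervalIntegral.integral_Iic_sub_Iic (integrableOn_exp_affine_Iic hc a u)
    (integrableOn_exp_affine_Iic hc a v), integral_exp_affine_Iic hc, integral_exp_affine_Iic hc,
    sub_div]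

end ExpAffine

namespace IsLogConcaveFn

section Module

variable {E : Type*} [AddCommGroup E] [Module ℝ E] {f : E → ℝ}

theorem comp_neg (hf : IsLogConcaveFn f) : IsLogConcaveFn fun x => f (-x) := by
  refine ⟨fun x => hf.1 (-x), fun x y l hl0 hl1 => ?_⟩
  simpa only [smul_neg, neg_add] using hf.2 (-x) (-y) l hl0 hl1

theorem pos_of_pos (hf : IsLogConcaveFn f) {x y : E} (hx : 0 < f x) (hy : 0 < f y) {l : ℝ}
    (hl0 : 0 ≤ l) (hl1 : l ≤ 1) : 0 < f (l • x + (1 - l) • y) :=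
  (mul_pos (rpow_pos_of_pos hx l) (rpow_pos_of_pos hy _)).trans_le (hf.2 x y l hl0 hl1)

end Module

variable {f : ℝ → ℝ}

theorem exp_affine_le_of_mem_Icc (hf : IsLogConcaveFn f) {a c u v t : ℝ}
    (hu : exp (a + c * u) ≤ f u) (hv : exp (a + c * v) ≤ f v) (ht : t ∈ Icc u v) :
    exp (a + c * t) ≤ f t := by
  obtain ⟨l, m, hl, hm, hlm, rfl⟩ := Icc_subset_segment ht
  obtain rfl : m = 1 - l := by linarith
  calc exp (a + c * (l • u + (1 - l) • v))
      = exp (a + c * u) ^ l * exp (a + c * v) ^ (1 - l) := by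
        rw [← exp_mul, ← exp_mul, ← exp_add, smul_eq_mul, smul_eq_mul]; ring_nf
    _ ≤ f u ^ l * f v ^ (1 - l) := by
        gcongr
        exact rpow_nonneg (hf.1 u) l
    _ ≤ f (l • u + (1 - l) • v) := hf.2 u v l hl (by linarith)

theorem le_exp_affine_of_le (hf : IsLogConcaveFn f) {a c t u v : ℝ} (htu : t ≤ u) (huv : u < v)
    (hu : f u ≤ exp (a + c * u)) (hv : exp (a + c * v) ≤ f v) :
    f t ≤ exp (a + c * t) := by
  obtain ⟨l, m, hl, hm, hlm, hu_eq⟩ := Icc_subset_segment ⟨htu, huv.le⟩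
  obtain rfl : m = 1 - l := by linarith
  have hl_pos : 0 < l := hl.lt_of_ne <| by
    rintro rfl
    simp only [zero_smul, sub_zero, one_smul, zero_add] at hu_eq
    exact huv.ne' hu_eq
  have hfv : 0 < f v ^ (1 - l) := rpow_pos_of_pos ((exp_pos _).trans_le hv) _
  have key : f t ^ l * f v ^ (1 - l) ≤ exp (a + c * t) ^ l * f v ^ (1 - l) :=
    calc f t ^ l * f v ^ (1 - l) ≤ f u := hu_eq ▸ hf.2 t v l hl (by linarith)
      _ ≤ exp (a + c * u) := hu
      _ = exp (a + c * t) ^ l * exp (a + c * v) ^ (1 - l) := by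
        rw [← exp_mul, ← exp_mul, ← exp_add, ← hu_eq, smul_eq_mul, smul_eq_mul]; ring_nf
      _ ≤ exp (a + c * t) ^ l * f v ^ (1 - l) := by gcongr
  exact (rpow_le_rpow_iff (hf.1 t) (exp_pos _).le hl_pos).1 (le_of_mul_le_mul_right key hfv)

theorem integral_Iic_eq_zero (hf : IsLogConcaveFn f) {b x : ℝ} (hb : f b = 0) (hbx : b < x)
    (hx : 0 < f x) : ∫ t in Iic b, f t = 0 := by
  refine setIntegral_eq_zero_of_forall_eq_zero fun t ht => ?_
  by_contra hne
  obtain ⟨l, m, hl, hm, hlm, hb_eq⟩ := Icc_subset_segment (𝕜 := ℝ) ⟨mem_Iic.1 ht, hbx.le⟩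
  obtain rfl : m = 1 - l := by linarith
  have hpos := hf.pos_of_pos ((hf.1 t).lt_of_ne' hne) hx hl (by linarith)
  rw [hb_eq, hb] at hpos
  exact hpos.false

theorem integral_Iic_mul_le_of_lt (hf : IsLogConcaveFn f) (hint : Integrable f) {b x : ℝ}
    (hb : 0 < f b) (hbx : b < x) (hfbx : f b < f x) :
    (∫ t in Iic b, f t) * f x ≤ (∫ t, f t) * f b := by
  set c := (log (f x) - log (f b)) / (x - b)
  set a := log (f b) - c * b
  have hc : 0 < c := div_pos (sub_pos.2 (log_lt_log hb hfbx)) (sub_pos.2 hbx)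
  have hab : exp (a + c * b) = f b := by simp only [a, sub_add_cancel, exp_log hb]
  have hax : exp (a + c * x) = f x := by
    have : a + c * x = log (f x) := by simp only [a, c]; field_simp [(sub_pos.2 hbx).ne']; ring
    rw [this, exp_log (hb.trans hfbx)]
  have hI : (∫ t in Iic b, f t) ≤ f b / c :=
    calc (∫ t in Iic b, f t) ≤ ∫ t in Iic b, exp (a + c * t) :=
          setIntegral_mono_on hint.integrableOn (integrableOn_exp_affine_Iic hc a b)
            measurableSet_Iic fun t ht => hf.le_exp_affine_of_le ht hbx hab.ge hax.le
      _ = f b / c := by rw [integral_exp_affine_Iic hc, hab]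
  have hJ : (f x - f b) / c ≤ ∫ t in b..x, f t :=
    calc (f x - f b) / c = ∫ t in b..x, exp (a + c * t) := by
          rw [integral_exp_affine hc, hab, hax]
      _ ≤ ∫ t in b..x, f t := intervalIntegral.integral_mono_on hbx.le
          ((continuous_exp.comp (by fun_prop)).intervalIntegrable b x)
          hint.intervalIntegrable fun t ht => hf.exp_affine_le_of_mem_Icc hab.le hax.le ht
  have hT : (∫ t in Iic b, f t) + ∫ t in b..x, f t ≤ ∫ t, f t := by
    rw [← intervalIntegral.integral_Iic_sub_Iic hint.integrableOn hint.integrableOn,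
      add_sub_cancel]
    exact setIntegral_le_integral hint (Filter.Eventually.of_forall hf.1)
  have hI0 : 0 ≤ ∫ t in Iic b, f t := setIntegral_nonneg measurableSet_Iic fun t _ => hf.1 t
  have hJ0 : 0 ≤ ∫ t in b..x, f t := intervalIntegral.integral_nonneg hbx.le fun t _ => hf.1 t
  rw [le_div_iff₀ hc] at hI
  rw [div_le_iff₀ hc] at hJ
  linarith [mul_le_mul_of_nonneg_left hJ hI0, mul_le_mul_of_nonneg_right hI hJ0,
    mul_le_mul_of_nonneg_right hT hb.le]

theorem integral_Iic_mul_le (hf : IsLogConcaveFn f) (hint : Integrable f) {b x : ℝ}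
    (hbx : b ≤ x) : (∫ t in Iic b, f t) * f x ≤ (∫ t, f t) * f b := by
  have hI0 : 0 ≤ ∫ t in Iic b, f t := setIntegral_nonneg measurableSet_Iic fun t _ => hf.1 t
  rcases le_or_gt (f x) (f b) with hle | hlt
  · calc (∫ t in Iic b, f t) * f x ≤ (∫ t in Iic b, f t) * f b := by gcongr
      _ ≤ (∫ t, f t) * f b := mul_le_mul_of_nonneg_right
          (setIntegral_le_integral hint (Filter.Eventually.of_forall hf.1)) (hf.1 b)
  have hbx' : b < x := hbx.lt_of_ne (by rintro rfl; exact hlt.false)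
  rcases (hf.1 b).eq_or_lt with hb | hb
  · rw [hf.integral_Iic_eq_zero hb.symm hbx' ((hf.1 b).trans_lt hlt), zero_mul]
    exact mul_nonneg (integral_nonneg hf.1) (hf.1 b)
  · exact hf.integral_Iic_mul_le_of_lt hint hb hbx' hlt

theorem integral_Ioi_mul_le (hf : IsLogConcaveFn f) (hint : Integrable f) {b x : ℝ}
    (hxb : x ≤ b) : (∫ t in Ioi b, f t) * f x ≤ (∫ t, f t) * f b := by
  simpa [integral_comp_neg_Iic, integral_neg_eq_self] using
    hf.comp_neg.integral_Iic_mul_le hint.comp_neg (neg_le_neg hxb)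

end IsLogConcaveFn

/-- for a log-concave probability density `f` on `ℝ`, if
`ε ≤ ∫₀^∞ f ≤ 1 - ε` then `f(0) ≥ ε sup f`. -/
theorem statement18 (f : ℝ → ℝ) (hlc : IsLogConcaveFn f) (hInt : Integrable f)
    (hmass : (∫ x, f x) = 1) (ε : ℝ) (hε : 0 < ε)
    (h₁ : ε ≤ ∫ x in Set.Ioi (0:ℝ), f x) (h₂ : (∫ x in Set.Ioi (0:ℝ), f x) ≤ 1 - ε) :
    ε * ⨆ x : ℝ, f x ≤ f 0 := by
  have hIic : ε ≤ ∫ t in Iic 0, f t := by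
    linarith [intervalIntegral.integral_Iic_add_Ioi (b := 0) hInt.integrableOn hInt.integrableOn]
  have hle : ∀ y, ε * f y ≤ f 0 := by
    intro y
    rcases le_total 0 y with hy | hy
    · calc ε * f y ≤ (∫ t in Iic 0, f t) * f y := mul_le_mul_of_nonneg_right hIic (hlc.1 y)
        _ ≤ (∫ t, f t) * f 0 := hlc.integral_Iic_mul_le hInt hy
        _ = f 0 := by rw [hmass, one_mul]
    · calc ε * f y ≤ (∫ t in Ioi 0, f t) * f y := mul_le_mul_of_nonneg_right h₁ (hlc.1 y)
        _ ≤ (∫ t, f t) * f 0 := hlc.integral_Ioi_mul_le hInt hy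
        _ = f 0 := by rw [hmass, one_mul]
  rw [Real.mul_iSup_of_nonneg hε.le]
  exact Real.iSup_le hle (hlc.1 0)
end
end
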